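/- For m, n ≥ 40 with gcd(m,n) ≥ 3, the L(2,1)-labeling number of C_m □ C_n equals 4; i.e., there exists a 4-L(2,1)-labeling but no 3-L(2,1)-labeling of C_m □ C_n. -/

import Mathlib

/-- `f` is a `k`-`L(2,1)`-labeling of the Cartesian product of oriented cycles
`C_m □ C_n`. -/
def IsL21Cart (m n k : ℕ) (f : ZMod m × ZMod n → ℕ) : Prop :=
  (∀ v, f v ≤ k) ∧
  (∀ i : ZMod m, ∀ j : ZMod n, (2 : ℤ) ≤ |(f (i + 1, j) : ℤ) - (f (i, j) : ℤ)|) ∧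
  (∀ i : ZMod m, ∀ j : ZMod n, (2 : ℤ) ≤ |(f (i, j + 1) : ℤ) - (f (i, j) : ℤ)|) ∧
  (∀ i : ZMod m, ∀ j : ZMod n, f (i + 2, j) ≠ f (i, j)) ∧
  (∀ i : ZMod m, ∀ j : ZMod n, f (i, j + 2) ≠ f (i, j)) ∧
  (∀ i : ZMod m, ∀ j : ZMod n, f (i + 1, j + 1) ≠ f (i, j))

/-!
Let `d = gcd m n`. The map `(i, j) ↦ i + j (mod d)` sends both kinds of arcs of `C_m □ C_n` to
arcs of the directed cycle `C_d`, and all three kinds of directed 2-paths to 2-paths of `C_d`, so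
an L(2,1)-labeling of `C_d` pulls back; for `d ≥ 3` the cycle `C_d` has one with labels `≤ 4`.

Conversely, with labels in `{0, 1, 2, 3}` the pairs allowed on an arc form the path `2 - 0 - 3 - 1`.
In a unit square the corners `(i, j)` and `(i + 1, j + 1)` carry distinct labels with two common
neighbours, which forces `f (i + 1, j) = 3` if `f (i, j) ≤ 1` and `f (i + 1, j) = 0` otherwise.
Along a row this gives `f (i + 3, j) = f (i + 1, j)`, contradicting the 2-path condition.
-/

def IsL21Cycle (d k : ℕ) (g : ZMod d → ℕ) : Prop :=
  (∀ x, g x ≤ k) ∧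
  (∀ x, (2 : ℤ) ≤ |(g (x + 1) : ℤ) - (g x : ℤ)|) ∧
  (∀ x, g (x + 2) ≠ g x)

/-- Read at `t < d`: the block `0 2 4` repeated, preceded by `0 3 1 4` if `d ≡ 1` and by
`0 2 4 1 3` if `d ≡ 2 (mod 3)`; the prefix length is `≡ d (mod 3)`, so for `3 ≤ d` whole
blocks fill the cycle. -/
def cycleLabel (d t : ℕ) : ℕ :=
  if d % 3 = 0 then 2 * (t % 3)
  else if d % 3 = 1 then
    if t = 0 then 0 else if t = 1 then 3 else if t = 2 then 1 else if t = 3 then 4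
    else 2 * ((t - 4) % 3)
  else
    if t = 0 then 0 else if t = 1 then 2 else if t = 2 then 4 else if t = 3 then 1
    else if t = 4 then 3 else 2 * ((t - 5) % 3)

lemma cycleLabel_le_four (d t : ℕ) : cycleLabel d t ≤ 4 := by
  unfold cycleLabel; split_ifs <;> omega

set_option maxHeartbeats 1000000 in
lemma cycleLabel_step {d t : ℕ} (hd : 3 ≤ d) (ht : t < d) :
    (2 : ℤ) ≤ |(cycleLabel d ((t + 1) % d) : ℤ) - cycleLabel d t| ∧
      cycleLabel d ((t + 2) % d) ≠ cycleLabel d t := by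
  rw [le_abs]
  obtain h | h | h : t + 2 < d ∨ t + 2 = d ∨ t + 1 = d := by omega
  · rw [Nat.mod_eq_of_lt (by omega : t + 1 < d), Nat.mod_eq_of_lt h]
    unfold cycleLabel; split_ifs <;> first | contradiction | omega
  · rw [Nat.mod_eq_of_lt (by omega : t + 1 < d), show (t + 2) % d = 0 by rw [h, Nat.mod_self]]
    unfold cycleLabel; split_ifs <;> first | contradiction | omega
  · rw [show (t + 1) % d = 0 by rw [h, Nat.mod_self],
      show (t + 2) % d = 1 by
        rw [show t + 2 = d + 1 by omega, Nat.add_mod_left, Nat.mod_eq_of_lt (by omega)]]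
    unfold cycleLabel; split_ifs <;> first | contradiction | omega

lemma ZMod.val_add_natCast {d : ℕ} [NeZero d] (x : ZMod d) (a : ℕ) :
    (x + a).val = (x.val + a) % d := by
  rw [← ZMod.val_natCast, Nat.cast_add, ZMod.natCast_zmod_val]

lemma exists_isL21Cycle_four {d : ℕ} (hd : 3 ≤ d) : ∃ g, IsL21Cycle d 4 g := by
  have : NeZero d := ⟨by omega⟩
  have hstep (x : ZMod d) := cycleLabel_step hd (ZMod.val_lt x)
  refine ⟨fun x => cycleLabel d x.val, fun _ => cycleLabel_le_four d _, fun x => ?_,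
    fun x => ?_⟩
  · dsimp only; rw [← Nat.cast_one, ZMod.val_add_natCast]; exact (hstep x).1
  · dsimp only; rw [← Nat.cast_ofNat, ZMod.val_add_natCast]; exact (hstep x).2

theorem IsL21Cycle.isL21Cart_comp_add {m n d k : ℕ} {g : ZMod d → ℕ}
    (hg : IsL21Cycle d k g) (hdm : d ∣ m) (hdn : d ∣ n) :
    IsL21Cart m n k
      (fun p => g (ZMod.castHom hdm (ZMod d) p.1 + ZMod.castHom hdn (ZMod d) p.2)) := by
  obtain ⟨hle, hstep, hskip⟩ := hg
  refine ⟨fun _ => hle _, fun i j => ?_, fun i j => ?_, fun i j => ?_, fun i j => ?_,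
    fun i j => ?_⟩
  all_goals simp only [map_add, map_one, map_ofNat]
  · rw [add_right_comm]; exact hstep _
  · rw [← add_assoc]; exact hstep _
  · rw [add_right_comm]; exact hskip _
  · rw [← add_assoc]; exact hskip _
  · rw [add_add_add_comm, one_add_one_eq_two]; exact hskip _

lemma IsL21Cart.succ_eq_of_le_three {m n k : ℕ} {f : ZMod m × ZMod n → ℕ}
    (hf : IsL21Cart m n k f) (hk : k ≤ 3) (i : ZMod m) (j : ZMod n) :
    f (i + 1, j) = if f (i, j) ≤ 1 then 3 else 0 := by
  obtain ⟨hle, hrow, hcol, -, -, hdiag⟩ := hf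
  have := hle (i, j); have := hle (i + 1, j)
  have := hle (i, j + 1); have := hle (i + 1, j + 1)
  have h₁ := hrow i j; have h₂ := hrow i (j + 1)
  have h₃ := hcol i j; have h₄ := hcol (i + 1) j
  have := hdiag i j
  rw [le_abs] at h₁ h₂ h₃ h₄
  split_ifs <;> omega

lemma IsL21Cart.four_le {m n k : ℕ} {f : ZMod m × ZMod n → ℕ} (hf : IsL21Cart m n k f) :
    4 ≤ k := by
  by_contra! hk
  have h₁ : f (1, 0) = if f (0, 0) ≤ 1 then 3 else 0 := by
    simpa using hf.succ_eq_of_le_three (by omega) 0 0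
  have h₂ := hf.succ_eq_of_le_three (by omega) 1 0
  have h₃ := hf.succ_eq_of_le_three (by omega) (1 + 1) 0
  have hskip := hf.2.2.2.1 1 0
  rw [show (1 : ZMod m) + 2 = 1 + 1 + 1 by ring] at hskip
  split_ifs at h₁ h₂ h₃ <;> omega

theorem stmt_4_general (m n : ℕ) (hgcd : 3 ≤ Nat.gcd m n) :
    IsLeast {k : ℕ | ∃ f, IsL21Cart m n k f} 4 := by
  obtain ⟨g, hg⟩ := exists_isL21Cycle_four hgcd
  exact ⟨⟨_, hg.isL21Cart_comp_add (Nat.gcd_dvd_left m n) (Nat.gcd_dvd_right m n)⟩,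
    fun _ ⟨_, hf⟩ => hf.four_le⟩

theorem stmt_4 (m n : ℕ) (hm : 40 ≤ m) (hn : 40 ≤ n) (hgcd : 3 ≤ Nat.gcd m n) :
    IsLeast {k : ℕ | ∃ f, IsL21Cart m n k f} 4 :=
  stmt_4_general m n hgcd
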